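/- arXiv:2210.00189 — 2 statements merged into one kernel-verified Lean document; each statement's English description precedes it below -/
import Mathlib

section
/- Let p, q be probability densities on ℝ^d and T : ℝ^d → ℝ^{d+1} a measurable sufficient-statistic map with ∫ ‖T(x)T(x)ᵀ‖_F² p(x) dx < ∞. Then the spectral norm of the matrix H = (1/2)∫ (p(x)q(x)/(p(x)+q(x))) T(x)T(x)ᵀ dx satisfies ‖H‖₂ ≤ (1/2)·(1 − TV(P,Q))^{1/2}·(∫ ‖T(x)T(x)ᵀ‖_F² p(x) dx)^{1/2}. -/
/-!
Since `pq/(p+q) ≤ min(p,q) ≤ p`, the weight of the Hessian factors as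
`pq/(p+q) ≤ √(min(p,q)) · √p`. Bounding the spectral norm by the Frobenius norm and moving the
norm inside the integral, Cauchy–Schwarz gives
`‖H‖_F ≤ ½ (∫ min(p,q))^{1/2} (∫ ‖TTᵀ‖_F² p)^{1/2}`, and `∫ min(p,q) = 1 − TV(P,Q)`.
-/

open MeasureTheory

attribute [local instance] Matrix.normedAddCommGroup Matrix.normedSpace

/-- Euclidean norm of a vector in ℝ^n. -/
noncomputable def vecNorm {n : ℕ} (v : Fin n → ℝ) : ℝ := Real.sqrt (∑ i, (v i) ^ 2)

/-- Spectral (ℓ²-operator) norm of a real square matrix. -/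
noncomputable def specNorm {n : ℕ} (M : Matrix (Fin n) (Fin n) ℝ) : ℝ :=
  sSup {r : ℝ | ∃ v : Fin n → ℝ, vecNorm v = 1 ∧ r = vecNorm (M.mulVec v)}

/-- Frobenius norm of a real square matrix. -/
noncomputable def frobNorm {n : ℕ} (M : Matrix (Fin n) (Fin n) ℝ) : ℝ :=
  Real.sqrt (∑ i, ∑ j, (M i j) ^ 2)

lemma frobNorm_nonneg {n : ℕ} (M : Matrix (Fin n) (Fin n) ℝ) : 0 ≤ frobNorm M :=
  Real.sqrt_nonneg _

lemma vecNorm_mulVec_le {n : ℕ} (M : Matrix (Fin n) (Fin n) ℝ) (v : Fin n → ℝ) :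
    vecNorm (M.mulVec v) ≤ frobNorm M * vecNorm v := by
  rw [frobNorm, vecNorm, vecNorm, ← Real.sqrt_mul (by positivity), Finset.sum_mul]
  gcongr with i
  exact Finset.sum_mul_sq_le_sq_mul_sq Finset.univ (M i) v

lemma specNorm_le_frobNorm {n : ℕ} (M : Matrix (Fin n) (Fin n) ℝ) :
    specNorm M ≤ frobNorm M := by
  refine Real.sSup_le ?_ (frobNorm_nonneg M)
  rintro r ⟨v, hv, rfl⟩
  simpa only [hv, mul_one] using vecNorm_mulVec_le M v

noncomputable def Matrix.frobeniusEquiv (n : ℕ) :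
    Matrix (Fin n) (Fin n) ℝ ≃L[ℝ] EuclideanSpace ℝ (Fin n × Fin n) :=
  LinearEquiv.toContinuousLinearEquiv <|
    (Matrix.ofLinearEquiv ℝ).symm ≪≫ₗ (LinearEquiv.curry ℝ ℝ _ _).symm ≪≫ₗ
      (WithLp.linearEquiv 2 ℝ _).symm

lemma norm_frobeniusEquiv {n : ℕ} (M : Matrix (Fin n) (Fin n) ℝ) :
    ‖Matrix.frobeniusEquiv n M‖ = frobNorm M := by
  simp [EuclideanSpace.norm_eq, frobNorm, Fintype.sum_prod_type, Matrix.frobeniusEquiv]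

lemma frobNorm_smul {n : ℕ} (c : ℝ) (M : Matrix (Fin n) (Fin n) ℝ) :
    frobNorm (c • M) = |c| * frobNorm M := by
  rw [← norm_frobeniusEquiv, ← norm_frobeniusEquiv, map_smul, norm_smul, Real.norm_eq_abs]

lemma frobNorm_integral_le {α : Type*} [MeasurableSpace α] {μ : Measure α} {n : ℕ}
    (f : α → Matrix (Fin n) (Fin n) ℝ) :
    frobNorm (∫ x, f x ∂μ) ≤ ∫ x, frobNorm (f x) ∂μ := by
  -- `rw` cannot use this: its instances match those in the type of `frobeniusEquiv` only up to
  -- unfolding.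
  have h := (Matrix.frobeniusEquiv n).integral_comp_comm (μ := μ) f
  calc frobNorm (∫ x, f x ∂μ) = ‖∫ x, Matrix.frobeniusEquiv n (f x) ∂μ‖ := by
        rw [← norm_frobeniusEquiv]; exact congrArg _ h.symm
    _ ≤ ∫ x, frobNorm (f x) ∂μ := by
        simpa only [norm_frobeniusEquiv] using norm_integral_le_integral_norm (μ := μ)
          fun x => Matrix.frobeniusEquiv n (f x)

lemma mul_div_add_le_min {a b : ℝ} (ha : 0 ≤ a) (hb : 0 ≤ b) : a * b / (a + b) ≤ min a b := by
  rcases (add_nonneg ha hb).eq_or_lt with hab | hab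
  · rw [← hab, div_zero]
    exact le_min ha hb
  · refine le_min ?_ ?_ <;> rw [div_le_iff₀ hab] <;> nlinarith

lemma mul_div_add_mul_le_sqrt_min_mul_sqrt {a b c : ℝ} (ha : 0 ≤ a) (hb : 0 ≤ b) (hc : 0 ≤ c) :
    a * b / (a + b) * c ≤ √(min a b) * √(c ^ 2 * a) := by
  have hm : 0 ≤ min a b := le_min ha hb
  rw [Real.sqrt_mul (sq_nonneg c), Real.sqrt_sq hc]
  calc a * b / (a + b) * c ≤ min a b * c := by gcongr; exact mul_div_add_le_min ha hb
    _ = √(min a b) * √(min a b) * c := by rw [Real.mul_self_sqrt hm]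
    _ ≤ √(min a b) * √a * c := by gcongr; exact min_le_left a b
    _ = √(min a b) * (c * √a) := by ring

section Integral

variable {α : Type*} [MeasurableSpace α] {μ : Measure α}

lemma integral_min_eq_one_sub_half_integral_abs_sub {p q : α → ℝ}
    (hp : Integrable p μ) (hq : Integrable q μ) (hp1 : ∫ x, p x ∂μ = 1) (hq1 : ∫ x, q x ∂μ = 1) :
    ∫ x, min (p x) (q x) ∂μ = 1 - (1 / 2) * ∫ x, |p x - q x| ∂μ := by
  have hmin : ∀ x, min (p x) (q x) = (p x + q x - |p x - q x|) / 2 := fun x => by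
    rw [← min_add_max (p x), abs_sub_comm, ← max_sub_min_eq_abs]; ring
  simp_rw [hmin]
  rw [integral_div, integral_sub (f := fun x => p x + q x) (g := fun x => |p x - q x|)
    (hp.add hq) (hp.sub hq).abs, integral_add hp hq, hp1, hq1]
  ring

lemma memLp_two_sqrt {F : α → ℝ} (hF0 : 0 ≤ᵐ[μ] F) (hF : Integrable F μ) :
    MemLp (fun x => √(F x)) 2 μ := by
  rw [memLp_two_iff_integrable_sq (Real.continuous_sqrt.comp_aestronglyMeasurable
    hF.aestronglyMeasurable)]
  refine hF.congr ?_
  filter_upwards [hF0] with x hx using (Real.sq_sqrt hx).symm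

variable {F G : α → ℝ} (hF0 : 0 ≤ᵐ[μ] F) (hG0 : 0 ≤ᵐ[μ] G)
  (hF : Integrable F μ) (hG : Integrable G μ)
include hF0 hG0 hF hG

lemma integrable_sqrt_mul_sqrt : Integrable (fun x => √(F x) * √(G x)) μ :=
  (memLp_two_sqrt hF0 hF).integrable_mul (memLp_two_sqrt hG0 hG)

lemma integral_sqrt_mul_sqrt_le :
    ∫ x, √(F x) * √(G x) ∂μ ≤ √(∫ x, F x ∂μ) * √(∫ x, G x ∂μ) := by
  have key := integral_mul_le_Lp_mul_Lq_of_nonneg Real.HolderConjugate.two_two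
    (ae_of_all μ fun x => Real.sqrt_nonneg (F x)) (ae_of_all μ fun x => Real.sqrt_nonneg (G x))
    (by simpa using memLp_two_sqrt hF0 hF) (by simpa using memLp_two_sqrt hG0 hG)
  have sq_sqrt_ae {H : α → ℝ} (hH0 : 0 ≤ᵐ[μ] H) :
      ∫ x, √(H x) ^ (2 : ℝ) ∂μ = ∫ x, H x ∂μ := by
    refine integral_congr_ae ?_
    filter_upwards [hH0] with x hx
    rw [Real.rpow_two, Real.sq_sqrt hx]
  rwa [sq_sqrt_ae hF0, sq_sqrt_ae hG0, ← Real.sqrt_eq_rpow, ← Real.sqrt_eq_rpow] at key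

end Integral

theorem nce_hessian_spectral_norm_bound_general (d : ℕ)
    (p q : (Fin d → ℝ) → ℝ) (T : (Fin d → ℝ) → Fin (d + 1) → ℝ)
    (hp0 : ∀ x, 0 ≤ p x) (hq0 : ∀ x, 0 ≤ q x)
    (hp : Integrable p) (hq : Integrable q)
    (hp1 : ∫ x, p x = 1) (hq1 : ∫ x, q x = 1)
    (hFisher : Integrable (fun x => frobNorm (Matrix.vecMulVec (T x) (T x)) ^ 2 * p x))
    (H : Matrix (Fin (d + 1)) (Fin (d + 1)) ℝ)
    (hHdef : H = (1 / 2 : ℝ) •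
      ∫ x, (p x * q x / (p x + q x)) • Matrix.vecMulVec (T x) (T x)) :
    specNorm H ≤ (1 / 2) *
      Real.sqrt (1 - (1 / 2) * ∫ x, |p x - q x|) *
      Real.sqrt (∫ x, frobNorm (Matrix.vecMulVec (T x) (T x)) ^ 2 * p x) := by
  set F := fun x : Fin d → ℝ => frobNorm (Matrix.vecMulVec (T x) (T x))
  have hw0 (x) : 0 ≤ p x * q x / (p x + q x) :=
    div_nonneg (mul_nonneg (hp0 x) (hq0 x)) (add_nonneg (hp0 x) (hq0 x))
  have hmin0 : 0 ≤ᵐ[volume] fun x : Fin d → ℝ => min (p x) (q x) :=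
    ae_of_all _ fun x => le_min (hp0 x) (hq0 x)
  have hFisher0 : 0 ≤ᵐ[volume] fun x : Fin d → ℝ => F x ^ 2 * p x :=
    ae_of_all _ fun x => mul_nonneg (sq_nonneg _) (hp0 x)
  have hweighted : ∫ x, p x * q x / (p x + q x) * F x ≤
      ∫ x, √(min (p x) (q x)) * √(F x ^ 2 * p x) :=
    integral_mono_of_nonneg (ae_of_all _ fun x => mul_nonneg (hw0 x) (frobNorm_nonneg _))
      (integrable_sqrt_mul_sqrt hmin0 hFisher0 (hp.inf hq) hFisher)
      (ae_of_all _ fun x =>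
        mul_div_add_mul_le_sqrt_min_mul_sqrt (hp0 x) (hq0 x) (frobNorm_nonneg _))
  calc specNorm H ≤ frobNorm H := specNorm_le_frobNorm H
    _ = 1 / 2 * frobNorm (∫ x, (p x * q x / (p x + q x)) • Matrix.vecMulVec (T x) (T x)) := by
        rw [hHdef, frobNorm_smul, abs_of_pos one_half_pos]
    _ ≤ 1 / 2 * ∫ x, p x * q x / (p x + q x) * F x := by
        gcongr
        simpa only [frobNorm_smul, abs_of_nonneg (hw0 _)] using frobNorm_integral_le (μ := volume)
          fun x => (p x * q x / (p x + q x)) • Matrix.vecMulVec (T x) (T x)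
    _ ≤ 1 / 2 * (√(∫ x, min (p x) (q x)) * √(∫ x, F x ^ 2 * p x)) := by
        gcongr
        exact hweighted.trans (integral_sqrt_mul_sqrt_le hmin0 hFisher0 (hp.inf hq) hFisher)
    _ = _ := by
        rw [integral_min_eq_one_sub_half_integral_abs_sub hp hq hp1 hq1]
        ring

theorem nce_hessian_spectral_norm_bound (d : ℕ)
    (p q : (Fin d → ℝ) → ℝ) (T : (Fin d → ℝ) → Fin (d + 1) → ℝ)
    (hp0 : ∀ x, 0 ≤ p x) (hq0 : ∀ x, 0 ≤ q x)
    (hp : Integrable p) (hq : Integrable q)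
    (hp1 : ∫ x, p x = 1) (hq1 : ∫ x, q x = 1)
    (hT : Measurable T)
    (hH : @Integrable _ _ SeminormedAddGroup.toContinuousENorm _ _ (fun x =>
      (p x * q x / (p x + q x)) • Matrix.vecMulVec (T x) (T x)) volume)
    (hFisher : Integrable (fun x => frobNorm (Matrix.vecMulVec (T x) (T x)) ^ 2 * p x))
    (H : Matrix (Fin (d + 1)) (Fin (d + 1)) ℝ)
    (hHdef : H = (1 / 2 : ℝ) •
      ∫ x, (p x * q x / (p x + q x)) • Matrix.vecMulVec (T x) (T x)) :
    specNorm H ≤ (1 / 2) *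
      Real.sqrt (1 - (1 / 2) * ∫ x, |p x - q x|) *
      Real.sqrt (∫ x, frobNorm (Matrix.vecMulVec (T x) (T x)) ^ 2 * p x) :=
  nce_hessian_spectral_norm_bound_general d p q T hp0 hq0 hp hq hp1 hq1 hFisher H hHdef
end

section
/- If X is a chi-squared random variable with d ≥ 4 degrees of freedom, then for every t ≥ 4, P(X ≥ 2td) ≤ exp(−t). -/
/-! A Chernoff bound by exponential tilting: on `[s, ∞)` the Gamma density of rate `r` is at most
`(r / r') ^ a * exp (-(r - r') * s)` times the Gamma density of rate `r' ≤ r`, a probability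
density. For the chi-squared law (`a = d / 2`, `r = 1 / 2`), `r' = 1 / 4` and `s = 2 t d` give
`2 ^ (d / 2) * exp (-(t d / 2))`, which is at most `exp (-t)` as soon as `d, t ≥ 4`. -/

open MeasureTheory ProbabilityTheory Set
open scoped ENNReal

namespace ProbabilityTheory

lemma gammaPDFReal_eq_mul_gammaPDFReal {a r r' : ℝ} (hr : 0 ≤ r) (hr' : 0 < r') (x : ℝ) :
    gammaPDFReal a r x = (r / r') ^ a * Real.exp (-((r - r') * x)) * gammaPDFReal a r' x := by
  rcases lt_or_ge x 0 with hx | hx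
  · simp [gammaPDFReal, hx.not_ge]
  · have hr'a : r' ^ a ≠ 0 := (Real.rpow_pos_of_pos hr' a).ne'
    simp only [gammaPDFReal, if_pos hx, Real.div_rpow hr hr'.le]
    have hexp : Real.exp (-(r * x)) = Real.exp (-((r - r') * x)) * Real.exp (-(r' * x)) := by
      rw [← Real.exp_add]; ring_nf
    rw [hexp]
    field_simp

lemma gammaMeasure_Ici_le_mul {a r r' : ℝ} (hr' : 0 < r') (hr'r : r' ≤ r) (s : ℝ) :
    gammaMeasure a r (Ici s) ≤
      ENNReal.ofReal ((r / r') ^ a * Real.exp (-((r - r') * s))) * gammaMeasure a r' (Ici s) := by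
  set C := (r / r') ^ a * Real.exp (-((r - r') * s))
  have hr : 0 ≤ r := hr'.le.trans hr'r
  have hpointwise : ∀ x ∈ Ici s, gammaPDF a r x ≤ ENNReal.ofReal C * gammaPDF a r' x := by
    intro x hx
    have htilt : Real.exp (-((r - r') * x)) ≤ Real.exp (-((r - r') * s)) :=
      Real.exp_le_exp.2 (neg_le_neg (mul_le_mul_of_nonneg_left hx (sub_nonneg.2 hr'r)))
    rw [gammaPDF, gammaPDF, gammaPDFReal_eq_mul_gammaPDFReal hr hr',
      ENNReal.ofReal_mul (by positivity)]
    gcongr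
    exact mul_le_mul_of_nonneg_left htilt (by positivity)
  have hmeas : Measurable (gammaPDF a r') := (measurable_gammaPDFReal a r').ennreal_ofReal
  rw [gammaMeasure, gammaMeasure, withDensity_apply _ measurableSet_Ici,
    withDensity_apply _ measurableSet_Ici, ← lintegral_const_mul _ hmeas]
  exact setLIntegral_mono (hmeas.const_mul _) hpointwise

lemma gammaMeasure_Ici_le {a r r' : ℝ} (ha : 0 < a) (hr' : 0 < r') (hr'r : r' ≤ r) (s : ℝ) :
    gammaMeasure a r (Ici s) ≤ ENNReal.ofReal ((r / r') ^ a * Real.exp (-((r - r') * s))) := by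
  have := isProbabilityMeasure_gammaMeasure ha hr'
  calc gammaMeasure a r (Ici s)
      ≤ ENNReal.ofReal ((r / r') ^ a * Real.exp (-((r - r') * s))) * gammaMeasure a r' (Ici s) :=
        gammaMeasure_Ici_le_mul hr' hr'r s
    _ ≤ ENNReal.ofReal ((r / r') ^ a * Real.exp (-((r - r') * s))) := mul_le_of_le_one_right'
        prob_le_one

end ProbabilityTheory

lemma two_rpow_half_mul_exp_le_exp {d t : ℝ} (hd : 4 ≤ d) (ht : 4 ≤ t) :
    (2 : ℝ) ^ (d / 2) * Real.exp (-(t * d / 2)) ≤ Real.exp (-t) := by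
  rw [Real.rpow_def_of_pos two_pos, ← Real.exp_add, Real.exp_le_exp]
  have hlog : Real.log 2 < 1 := Real.log_two_lt_d9.trans (by norm_num)
  nlinarith [mul_nonneg (sub_nonneg.2 ht) (sub_nonneg.2 hd)]

theorem chi_squared_tail_bound (d : ℕ) (hd : 4 ≤ d) (t : ℝ) (ht : 4 ≤ t) :
    gammaMeasure (d / 2 : ℝ) (1 / 2) {x : ℝ | 2 * t * d ≤ x} ≤ ENNReal.ofReal (Real.exp (-t)) := by
  have hd' : (4 : ℝ) ≤ d := by exact_mod_cast hd
  calc gammaMeasure (d / 2 : ℝ) (1 / 2) (Ici (2 * t * d))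
      ≤ ENNReal.ofReal ((1 / 2 / (1 / 4)) ^ (d / 2 : ℝ) *
          Real.exp (-((1 / 2 - 1 / 4) * (2 * t * d)))) :=
        gammaMeasure_Ici_le (by positivity) (by norm_num) (by norm_num) _
    _ = ENNReal.ofReal ((2 : ℝ) ^ (d / 2 : ℝ) * Real.exp (-(t * d / 2))) := by norm_num; ring_nf
    _ ≤ ENNReal.ofReal (Real.exp (-t)) :=
        ENNReal.ofReal_le_ofReal (two_rpow_half_mul_exp_le_exp hd' ht)
end
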